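/- arXiv:2411.10197 — 11 statements merged into one kernel-verified Lean document; each statement's English description precedes it below -/
import Mathlib

section
/- Soundness of supporting arguments: for every supporting argument P ⇒ φ in the set A∞ of derivable arguments, P ⊆ Σ and P semantically entails φ. -/
/-- Propositional formulas over atoms `α`, built with `¬` and `→`. -/
inductive Fml (α : Type) : Type
  | atom : α → Fml α
  | neg  : Fml α → Fml α
  | imp  : Fml α → Fml α → Fml α

/-- Satisfaction of a formula by an interpretation (a set of atoms). -/
def Fml.sat {α : Type} (M : Set α) : Fml α → Prop
  | .atom a => a ∈ M
  | .neg φ => ¬ Fml.sat M φ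
  | .imp φ ψ => Fml.sat M φ → Fml.sat M ψ

/-- Semantic entailment `S ⊨ φ`. -/
def Entails {α : Type} (S : Set (Fml α)) (φ : Fml α) : Prop :=
  ∀ M : Set α, (∀ ψ ∈ S, Fml.sat M ψ) → Fml.sat M φ

/-- Satisfiability of a set of formulas. -/
def Satisfiable {α : Type} (S : Set (Fml α)) : Prop :=
  ∃ M : Set α, ∀ ψ ∈ S, Fml.sat M ψ

/-- Propositional tautology. -/
def Tautology {α : Type} (φ : Fml α) : Prop :=
  ∀ M : Set α, Fml.sat M φ

/-- `prec` is a reliability relation on `Sg`: a strict partial order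
(irreflexive, asymmetric, transitive) relating only members of `Sg`. -/
def IsReliability {β : Type} (Sg : Set β) (prec : β → β → Prop) : Prop :=
  (∀ a b, prec a b → a ∈ Sg ∧ b ∈ Sg) ∧
  (∀ a, ¬ prec a a) ∧
  (∀ a b, prec a b → ¬ prec b a) ∧
  (∀ a b c, prec a b → prec b c → prec a c)

/-- `lt` is a strict linear order on `Sg` extending `prec`. -/
def IsLinearExt {β : Type} (Sg : Set β) (prec lt : β → β → Prop) : Prop :=
  (∀ a b, lt a b → a ∈ Sg ∧ b ∈ Sg) ∧
  (∀ a, ¬ lt a a) ∧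
  (∀ a b c, lt a b → lt b c → lt a c) ∧
  (∀ a ∈ Sg, ∀ b ∈ Sg, a ≠ b → lt a b ∨ lt b a) ∧
  (∀ a b, prec a b → lt a b)

/-- Arguments: supporting arguments `P ⇒ φ` and undermining arguments `P ⇏ φ`. -/
inductive Arg (α : Type) : Type
  | sup : Set (Fml α) → Fml α → Arg α
  | und : Set (Fml α) → Fml α → Arg α

/-- The set `A∞` of derivable arguments, as an inductive predicate:
initial arguments, the axiom rule, modus ponens and the contradiction rule. -/
inductive Derivable {α : Type} (Sg : Set (Fml α)) (lt : Fml α → Fml α → Prop) :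
    Arg α → Prop
  | initial {φ} (h : φ ∈ Sg) : Derivable Sg lt (.sup {φ} φ)
  | ax {φ} (h : Tautology φ) : Derivable Sg lt (.sup ∅ φ)
  | mp {P Q φ ψ} (h1 : Derivable Sg lt (.sup P φ))
      (h2 : Derivable Sg lt (.sup Q (.imp φ ψ))) :
      Derivable Sg lt (.sup (P ∪ Q) ψ)
  | contra {P Q φ η} (h1 : Derivable Sg lt (.sup P φ))
      (h2 : Derivable Sg lt (.sup Q (.neg φ)))
      (hmem : η ∈ P ∪ Q) (hmin : ∀ x ∈ P ∪ Q, x ≠ η → lt η x) :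
      Derivable Sg lt (.und ((P ∪ Q) \ {η}) η)

/-- The set `A∞` of derivable arguments. -/
def Ainf {α : Type} (Sg : Set (Fml α)) (lt : Fml α → Fml α → Prop) : Set (Arg α) :=
  {a | Derivable Sg lt a}

/-- `Out_A(S)`: premisses ruled out by undermining arguments in `A`
whose antecedents lie in `S`. -/
def OutA {α : Type} (A : Set (Arg α)) (S : Set (Fml α)) : Set (Fml α) :=
  {φ | ∃ P, Arg.und P φ ∈ A ∧ P ⊆ S}

open scoped Classical in
/-- The most reliable consistent set of premisses built from an enumeration. -/
noncomputable def mrcBuild {α : Type} (l : List (Fml α)) : Set (Fml α) :=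
  l.foldl (fun D σ => if Satisfiable (insert σ D) then insert σ D else D) ∅

/-- `l` enumerates `Sg` so that more reliable premisses come first:
whenever `l[j] ≺ l[k]` one has `k < j`. -/
def IsEnum {β : Type} (Sg : Set β) (prec : β → β → Prop) (l : List β) : Prop :=
  l.Nodup ∧ (∀ x, x ∈ l ↔ x ∈ Sg) ∧
  ∀ (j k : Fin l.length), prec (l.get j) (l.get k) → (k : ℕ) < (j : ℕ)

/-- `D` is a most reliable consistent set of premisses of `⟨Sg, prec⟩`. -/
def MRC {α : Type} (Sg : Set (Fml α)) (prec : Fml α → Fml α → Prop)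
    (D : Set (Fml α)) : Prop :=
  ∃ l : List (Fml α), IsEnum Sg prec l ∧ D = mrcBuild l

/-- `Prem(M)`: the premisses of `Sg` satisfied by interpretation `M`. -/
def PremOf {α : Type} (Sg : Set (Fml α)) (M : Set α) : Set (Fml α) :=
  {φ | φ ∈ Sg ∧ Fml.sat M φ}

/-- The preference relation `M ⊏ N` on interpretations. -/
def Pref {α : Type} (Sg : Set (Fml α)) (prec : Fml α → Fml α → Prop)
    (M N : Set α) : Prop :=
  PremOf Sg M ≠ PremOf Sg N ∧
  ∀ φ ∈ PremOf Sg M \ PremOf Sg N, ∃ ψ ∈ PremOf Sg N \ PremOf Sg M, prec φ ψ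

/-- `Th(⟨Sg, prec⟩)`: formulas entailed by every most reliable consistent set. -/
def ThR {α : Type} (Sg : Set (Fml α)) (prec : Fml α → Fml α → Prop) : Set (Fml α) :=
  {φ | ∀ D, MRC Sg prec D → Entails D φ}

/-- The reliability relation of the `a`-revised theory:
`prec` restricted to `Sg \ {a}`, with `a` strictly more reliable than
every other premiss. -/
def RevPrec {α : Type} (Sg : Set (Fml α)) (prec : Fml α → Fml α → Prop) (a : Fml α) :
    Fml α → Fml α → Prop :=
  fun x y => (prec x y ∧ x ∈ Sg \ {a} ∧ y ∈ Sg \ {a}) ∨ (x ∈ Sg \ {a} ∧ y = a)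

lemma aux {α : Type} (Sg : Set (Fml α)) (lt : Fml α → Fml α → Prop)
    (a : Arg α) (h : Derivable Sg lt a) :
    ∀ P φ, a = Arg.sup P φ → P ⊆ Sg ∧ Entails P φ := by
  induction h with
  | initial hφ => rintro P ψ ⟨rfl, rfl⟩
                  exact ⟨by simpa using hφ, fun M hM => hM _ rfl⟩
  | ax ht => rintro P ψ ⟨rfl, rfl⟩
             exact ⟨by simp, fun M _ => ht M⟩
  | mp h1 h2 ih1 ih2 =>
      rintro R χ ⟨rfl, rfl⟩
      obtain ⟨hs1, he1⟩ := ih1 _ _ rfl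
      obtain ⟨hs2, he2⟩ := ih2 _ _ rfl
      refine ⟨Set.union_subset hs1 hs2, fun M hM => ?_⟩
      exact he2 M (fun ψ hψ => hM ψ (Or.inr hψ)) (he1 M (fun ψ hψ => hM ψ (Or.inl hψ)))
  | contra h1 h2 hmem hmin ih1 ih2 => rintro P ψ ⟨⟩


/-- Soundness of supporting arguments: every derivable supporting
argument `P ⇒ φ` satisfies `P ⊆ Σ` and `P ⊨ φ`. -/
theorem supporting_soundness {α : Type} (Sg : Set (Fml α)) (hfin : Sg.Finite)
    (prec lt : Fml α → Fml α → Prop)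
    (hprec : IsReliability Sg prec) (hlt : IsLinearExt Sg prec lt)
    (P : Set (Fml α)) (φ : Fml α)
    (h : Arg.sup P φ ∈ Ainf Sg lt) :
    P ⊆ Sg ∧ Entails P φ := aux Sg lt _ h P φ rfl
end

section
/- Completeness of supporting arguments: for every P ⊆ Σ and every formula φ, if P semantically entails φ, then there exists Q ⊆ P such that the supporting argument Q ⇒ φ belongs to the set A∞ of derivable arguments. -/
lemma sat_foldr {α : Type} (M : Set α) (φ : Fml α) :
    ∀ l : List (Fml α),
      Fml.sat M (l.foldr Fml.imp φ) ↔ ((∀ ψ ∈ l, Fml.sat M ψ) → Fml.sat M φ)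
  | [] => by simp
  | a :: l => by
    simp only [List.foldr_cons, List.mem_cons, Fml.sat]
    rw [sat_foldr M φ l]
    constructor
    · intro h hall; exact h (hall a (Or.inl rfl)) (fun ψ hψ => hall ψ (Or.inr hψ))
    · intro h ha hall; exact h (fun ψ hψ => hψ.elim (fun e => e ▸ ha) (hall ψ))

lemma derivable_congr {α : Type} {Sg : Set (Fml α)} {lt : Fml α → Fml α → Prop}
    {P Q : Set (Fml α)} {φ : Fml α} (h : P = Q)
    (hd : Derivable Sg lt (.sup P φ)) : Derivable Sg lt (.sup Q φ) := h ▸ hd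

lemma peel {α : Type} (Sg : Set (Fml α)) (lt : Fml α → Fml α → Prop) (φ : Fml α) :
    ∀ l : List (Fml α), (∀ x ∈ l, x ∈ Sg) →
      ∀ Q : Set (Fml α), Derivable Sg lt (.sup Q (l.foldr Fml.imp φ)) →
      Derivable Sg lt (.sup (Q ∪ {x | x ∈ l}) φ)
  | [] => by
    intro _ Q h
    apply derivable_congr (P := Q) (by simp)
    exact h
  | a :: l => fun hmem Q h => by
    have h1 : Derivable Sg lt (.sup {a} a) := .initial (hmem a (by simp))
    have h2 : Derivable Sg lt (.sup ({a} ∪ Q) (l.foldr Fml.imp φ)) := .mp h1 h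
    have h3 := peel Sg lt φ l (fun x hx => hmem x (by simp [hx])) _ h2
    apply derivable_congr (P := ({a} ∪ Q) ∪ {x | x ∈ l}) _ h3
    ext x; simp [List.mem_cons]; tauto

/-- Completeness of supporting arguments: if `P ⊆ Σ` semantically
entails `φ`, then some `Q ⊆ P` gives a derivable supporting argument `Q ⇒ φ`. -/
theorem supporting_completeness {α : Type} (Sg : Set (Fml α)) (hfin : Sg.Finite)
    (prec lt : Fml α → Fml α → Prop)
    (hprec : IsReliability Sg prec) (hlt : IsLinearExt Sg prec lt)
    (P : Set (Fml α)) (hP : P ⊆ Sg) (φ : Fml α) (h : Entails P φ) :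
    ∃ Q ⊆ P, Arg.sup Q φ ∈ Ainf Sg lt := by
  classical
  have hPfin : P.Finite := hfin.subset hP
  obtain ⟨l, hnd, hl⟩ : ∃ l : List (Fml α), l.Nodup ∧ ∀ x, x ∈ l ↔ x ∈ P := by
    refine ⟨hPfin.toFinset.toList, Finset.nodup_toList _, fun x => ?_⟩
    simp
  have htaut : Tautology (l.foldr Fml.imp φ) := by
    intro M
    rw [sat_foldr]
    intro hall
    exact h M (fun ψ hψ => hall ψ ((hl ψ).2 hψ))
  have h0 : Derivable Sg lt (.sup ∅ (l.foldr Fml.imp φ)) := .ax htaut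
  have h1 := peel Sg lt φ l (fun x hx => hP ((hl x).1 hx)) ∅ h0
  refine ⟨P, le_refl _, ?_⟩
  have : (∅ ∪ {x | x ∈ l} : Set (Fml α)) = P := by
    ext x; simp [hl x]
  exact this ▸ h1
end

section
/- Soundness of undermining arguments: for every undermining argument P ⇏ φ in the set A∞ of derivable arguments, P ∪ {φ} ⊆ Σ and P ∪ {φ} is not satisfiable. -/
lemma sound_aux {α : Type} {Sg : Set (Fml α)} {lt : Fml α → Fml α → Prop}
    {A : Arg α} (h : Derivable Sg lt A) :
    (∀ P φ, A = .sup P φ → P ⊆ Sg ∧ Entails P φ) ∧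
    (∀ P φ, A = .und P φ → P ∪ {φ} ⊆ Sg ∧ ¬ Satisfiable (P ∪ {φ})) := by
  induction h with
  | initial h =>
      refine ⟨fun P φ e => ?_, fun P φ e => by cases e⟩
      cases e
      exact ⟨by simpa using h, fun M hM => hM _ rfl⟩
  | ax h =>
      refine ⟨fun P φ e => ?_, fun P φ e => by cases e⟩
      cases e
      exact ⟨by simp, fun M _ => h M⟩
  | mp h1 h2 ih1 ih2 =>
      refine ⟨fun P φ e => ?_, fun P φ e => by cases e⟩
      cases e
      obtain ⟨hs1, he1⟩ := ih1.1 _ _ rfl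
      obtain ⟨hs2, he2⟩ := ih2.1 _ _ rfl
      refine ⟨Set.union_subset hs1 hs2, fun M hM => ?_⟩
      exact he2 M (fun ψ hψ => hM _ (Or.inr hψ)) (he1 M (fun ψ hψ => hM _ (Or.inl hψ)))
  | @contra P Q ψ η h1 h2 hmem hmin ih1 ih2 =>
      constructor
      · intro P' φ' e; cases e
      intro P' φ' e
      cases e
      obtain ⟨hs1, he1⟩ := ih1.1 _ _ rfl
      obtain ⟨hs2, he2⟩ := ih2.1 _ _ rfl
      have hset : (P ∪ Q) \ {η} ∪ {η} = P ∪ Q := by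
        ext x
        simp only [Set.mem_union, Set.mem_diff, Set.mem_singleton_iff]
        constructor
        · rintro (⟨h, _⟩ | rfl)
          · exact h
          · exact hmem
        · intro h; by_cases hx : x = η
          · exact Or.inr hx
          · exact Or.inl ⟨h, hx⟩
      rw [hset]
      refine ⟨Set.union_subset hs1 hs2, ?_⟩
      rintro ⟨M, hM⟩
      exact he2 M (fun x hx => hM _ (Or.inr hx)) (he1 M (fun x hx => hM _ (Or.inl hx)))

/-- Soundness of undermining arguments: every derivable undermining
argument `P ⇏ φ` satisfies `P ∪ {φ} ⊆ Σ` and `P ∪ {φ}` is not satisfiable. -/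
theorem undermining_soundness {α : Type} (Sg : Set (Fml α)) (hfin : Sg.Finite)
    (prec lt : Fml α → Fml α → Prop)
    (hprec : IsReliability Sg prec) (hlt : IsLinearExt Sg prec lt)
    (P : Set (Fml α)) (φ : Fml α)
    (h : Arg.und P φ ∈ Ainf Sg lt) :
    P ∪ {φ} ⊆ Sg ∧ ¬ Satisfiable (P ∪ {φ}) := by
  exact (sound_aux h).2 P φ rfl
end

section
/- Completeness of undermining arguments: for every P ⊆ Σ, if P is a minimal unsatisfiable set of premisses (P is unsatisfiable but every proper subset of P is satisfiable) and φ is the ≺'-least element of P, then the undermining argument (P \ {φ}) ⇏ φ belongs to the set A∞ of derivable arguments. -/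
/-
Every entailment `S ⊨ ψ` from a finite set of premisses is witnessed by a supporting argument
`S ⇒ ψ`: discharge the premisses one at a time, `S ∪ {a} ⊨ ψ` becoming `S ⊨ a → ψ`, until only a
tautology is left, and then rebuild the argument by modus ponens with the initial arguments.
If `P` is unsatisfiable and `φ ∈ P`, then `P \ {φ} ⊨ ¬φ`, so `{φ} ⇒ φ` and `P \ {φ} ⇒ ¬φ` are
both derivable, and the contradiction rule undermines the `≺'`-least element `φ` of their union `P`.
-/

theorem tautology_of_entails_empty {α : Type} {ψ : Fml α} (h : Entails ∅ ψ) : Tautology ψ :=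
  fun M => h M fun _ hx => absurd hx (Set.notMem_empty _)

theorem entails_imp_of_entails_insert {α : Type} {S : Set (Fml α)} {a ψ : Fml α}
    (h : Entails (insert a S) ψ) : Entails S (.imp a ψ) := by
  intro M hS ha
  exact h M fun x hx => hx.elim (fun hxa => hxa ▸ ha) (hS x)

theorem entails_neg_of_not_satisfiable {α : Type} {P : Set (Fml α)} {φ : Fml α}
    (hunsat : ¬ Satisfiable P) : Entails (P \ {φ}) (.neg φ) := by
  intro M hM hφ
  refine hunsat ⟨M, fun ψ hψ => ?_⟩
  by_cases hψφ : ψ = φ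
  · exact hψφ ▸ hφ
  · exact hM ψ ⟨hψ, hψφ⟩

theorem Derivable.sup_of_entails {α : Type} {Sg : Set (Fml α)} {lt : Fml α → Fml α → Prop}
    {S : Set (Fml α)} (hS : S.Finite) (hSg : S ⊆ Sg) :
    ∀ {ψ : Fml α}, Entails S ψ → Derivable Sg lt (.sup S ψ) := by
  induction S, hS using Set.Finite.induction_on with
  | empty => exact fun h => .ax (tautology_of_entails_empty h)
  | @insert a S _ _ ih =>
    intro ψ h
    have ha : Derivable Sg lt (.sup {a} a) := .initial (hSg (Set.mem_insert a S))
    have himp : Derivable Sg lt (.sup S (.imp a ψ)) :=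
      ih ((Set.subset_insert a S).trans hSg) (entails_imp_of_entails_insert h)
    rw [Set.insert_eq]
    exact ha.mp himp

theorem undermining_completeness_general {α : Type} (Sg : Set (Fml α)) (hfin : Sg.Finite)
    (lt : Fml α → Fml α → Prop)
    (P : Set (Fml α)) (hP : P ⊆ Sg)
    (hunsat : ¬ Satisfiable P)
    (φ : Fml α) (hφ : φ ∈ P) (hleast : ∀ x ∈ P, x ≠ φ → lt φ x) :
    Arg.und (P \ {φ}) φ ∈ Ainf Sg lt := by
  have hφφ : Derivable Sg lt (.sup {φ} φ) := .initial (hP hφ)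
  have hrest : Derivable Sg lt (.sup (P \ {φ}) (.neg φ)) :=
    Derivable.sup_of_entails (hfin.subset hP).sdiff (Set.sdiff_subset.trans hP)
      (entails_neg_of_not_satisfiable hunsat)
  have hunion : {φ} ∪ P \ {φ} = P := Set.union_sdiff_cancel (Set.singleton_subset_iff.2 hφ)
  have h := hφφ.contra hrest (η := φ) (Or.inl rfl) (by rw [hunion]; exact hleast)
  rwa [hunion] at h

/-- Completeness of undermining arguments: if `P ⊆ Σ` is a minimal
unsatisfiable set of premisses and `φ` is its `≺'`-least element, then
`(P \ {φ}) ⇏ φ` is derivable. -/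
theorem undermining_completeness {α : Type} (Sg : Set (Fml α)) (hfin : Sg.Finite)
    (prec lt : Fml α → Fml α → Prop)
    (hprec : IsReliability Sg prec) (hlt : IsLinearExt Sg prec lt)
    (P : Set (Fml α)) (hP : P ⊆ Sg)
    (hunsat : ¬ Satisfiable P) (hmin : ∀ Q, Q ⊂ P → Satisfiable Q)
    (φ : Fml α) (hφ : φ ∈ P) (hleast : ∀ x ∈ P, x ≠ φ → lt φ x) :
    Arg.und (P \ {φ}) φ ∈ Ainf Sg lt :=
  undermining_completeness_general Sg hfin lt P hP hunsat φ hφ hleast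
end

section
/- Existence and uniqueness of the set of believed premisses: let Σ be a finite set, ≺' a strict linear order on Σ, and U a set of pairs (P, φ) with P ⊆ Σ, φ ∈ Σ \ P, and φ ≺' ψ for every ψ ∈ P. Define Out(S) = {φ | there is (P, φ) ∈ U with P ⊆ S}. Then there exists exactly one set Δ ⊆ Σ satisfying Δ = Σ \ Out(Δ). -/
/-- Existence and uniqueness of the set of believed premisses:
for a finite `Σ`, a strict linear order `≺'` on `Σ`, and a set `U` of
undermining arguments `(P, φ)` (with `P ⊆ Σ`, `φ ∈ Σ \ P`, and `φ ≺' ψ` for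
every `ψ ∈ P`), there is exactly one `Δ ⊆ Σ` with `Δ = Σ \ Out(Δ)`. -/
theorem believed_premisses_exists_unique {β : Type} (Sg : Set β) (hfin : Sg.Finite)
    (lt : β → β → Prop)
    (hlt : (∀ a b, lt a b → a ∈ Sg ∧ b ∈ Sg) ∧ (∀ a, ¬ lt a a) ∧
      (∀ a b c, lt a b → lt b c → lt a c) ∧
      (∀ a ∈ Sg, ∀ b ∈ Sg, a ≠ b → lt a b ∨ lt b a))
    (U : Set (Set β × β))
    (hU : ∀ p ∈ U, p.1 ⊆ Sg ∧ p.2 ∈ Sg ∧ p.2 ∉ p.1 ∧ ∀ ψ ∈ p.1, lt p.2 ψ) :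
    ∃! Δ : Set β, Δ = Sg \ {φ | ∃ p ∈ U, p.2 = φ ∧ p.1 ⊆ Δ} := by
  classical
  obtain ⟨hmemS, hirr, htrans, _⟩ := hlt
  -- reverse order is well-founded
  set r : β → β → Prop := fun a b => lt b a with hr
  have hwf : WellFounded r := by
    have hsub : Subrelation r
        (InvImage (· < ·) (fun φ => (hfin.toFinset.filter (fun x => lt φ x)).card)) := by
      intro a b hab
      apply Finset.card_lt_card
      constructor
      · intro x hx
        simp only [Finset.mem_filter] at hx ⊢
        exact ⟨hx.1, htrans _ _ _ hab hx.2⟩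
      · intro hcon
        have ha : a ∈ hfin.toFinset.filter (fun x => lt b x) := by
          simp only [Finset.mem_filter, Set.Finite.mem_toFinset]
          exact ⟨(hmemS _ _ hab).2, hab⟩
        have := hcon ha
        simp only [Finset.mem_filter] at this
        exact hirr a this.2
    exact Subrelation.wf hsub (InvImage.wf _ wellFounded_lt)
  -- define membership by well-founded recursion on r
  let F : ∀ φ : β, (∀ ψ, r ψ φ → Prop) → Prop := fun φ ih =>
    φ ∈ Sg ∧ ¬ ∃ p, ∃ hp : p ∈ U, ∃ heq : p.2 = φ,
      ∀ ψ, ∀ hψ : ψ ∈ p.1, ih ψ (heq ▸ (hU p hp).2.2.2 ψ hψ)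
  let mem : β → Prop := hwf.fix F
  have hfixeq : ∀ φ, mem φ = F φ (fun ψ _ => mem ψ) := fun φ => hwf.fix_eq F φ
  -- key characterization of a fixed point
  have hchar : ∀ (Δ : Set β), Δ = Sg \ {φ | ∃ p ∈ U, p.2 = φ ∧ p.1 ⊆ Δ} →
      ∀ φ, φ ∈ Δ ↔ (φ ∈ Sg ∧ ¬ ∃ p ∈ U, p.2 = φ ∧ p.1 ⊆ Δ) := by
    intro Δ hΔ φ
    conv_lhs => rw [hΔ]
    simp [Set.mem_diff]
  have hmemiff : ∀ φ, mem φ ↔ (φ ∈ Sg ∧ ¬ ∃ p ∈ U, p.2 = φ ∧ ∀ ψ ∈ p.1, mem ψ) := by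
    intro φ
    rw [hfixeq φ]
    constructor
    · rintro ⟨h1, h2⟩
      refine ⟨h1, ?_⟩
      rintro ⟨p, hp, heq, hsub⟩
      exact h2 ⟨p, hp, heq, fun ψ hψ => hsub ψ hψ⟩
    · rintro ⟨h1, h2⟩
      refine ⟨h1, ?_⟩
      rintro ⟨p, hp, heq, hsub⟩
      exact h2 ⟨p, hp, heq, fun ψ hψ => hsub ψ hψ⟩
  set Δ₀ : Set β := {φ | mem φ} with hΔ₀
  have hfix : Δ₀ = Sg \ {φ | ∃ p ∈ U, p.2 = φ ∧ p.1 ⊆ Δ₀} := by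
    ext φ
    rw [Set.mem_diff]
    exact hmemiff φ
  refine ⟨Δ₀, hfix, ?_⟩
  intro Δ hΔ
  ext φ
  induction φ using hwf.induction with
  | _ φ ih =>
    rw [hchar Δ hΔ φ, hchar Δ₀ hfix φ]
    have hiff : (∃ p ∈ U, p.2 = φ ∧ p.1 ⊆ Δ) ↔ (∃ p ∈ U, p.2 = φ ∧ p.1 ⊆ Δ₀) := by
      constructor
      · rintro ⟨p, hp, heq, hsub⟩
        refine ⟨p, hp, heq, fun ψ hψ => ?_⟩
        exact (ih ψ (heq ▸ (hU p hp).2.2.2 ψ hψ)).mp (hsub hψ)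
      · rintro ⟨p, hp, heq, hsub⟩
        refine ⟨p, hp, heq, fun ψ hψ => ?_⟩
        exact (ih ψ (heq ▸ (hU p hp).2.2.2 ψ hψ)).mpr (hsub hψ)
    rw [hiff]
end

section
/- Every believed proposition is entailed by the believed premisses: let A be any subset of the set A∞ of derivable arguments, let Δ ⊆ Σ satisfy Δ = Σ \ Out_A(Δ), and let B = {ψ | there is a supporting argument P ⇒ ψ in A with P ⊆ Δ}. Then for every φ ∈ B, Δ semantically entails φ. -/

theorem sup_entails {α : Type} {Sg : Set (Fml α)} {lt : Fml α → Fml α → Prop}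
    {a : Arg α} (h : Derivable Sg lt a) :
    ∀ P φ, a = .sup P φ → Entails P φ := by
  induction h with
  | initial h => intro P φ he; cases he; intro M hM; exact hM _ rfl
  | ax h => intro P φ he; cases he; intro M hM; exact h M
  | mp h1 h2 ih1 ih2 =>
      intro R χ he; cases he
      intro M hM
      exact (ih2 _ _ rfl) M (fun ψ hψ => hM ψ (Or.inr hψ))
        ((ih1 _ _ rfl) M (fun ψ hψ => hM ψ (Or.inl hψ)))
  | contra h1 h2 hmem hmin ih1 ih2 => intro P φ he; cases he

/-- Every believed proposition is entailed by the believed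
premisses: if `A ⊆ A∞`, `Δ = Σ \ Out_A(Δ)` and
`B = {ψ | ∃ (P ⇒ ψ) ∈ A, P ⊆ Δ}`, then every `φ ∈ B` is entailed by `Δ`. -/
theorem believed_entailed {α : Type} (Sg : Set (Fml α)) (hfin : Sg.Finite)
    (prec lt : Fml α → Fml α → Prop)
    (hprec : IsReliability Sg prec) (hlt : IsLinearExt Sg prec lt)
    (A : Set (Arg α)) (hA : A ⊆ Ainf Sg lt)
    (Δ : Set (Fml α)) (hΔ : Δ = Sg \ OutA A Δ)
    (φ : Fml α) (hφ : φ ∈ {ψ | ∃ P, Arg.sup P ψ ∈ A ∧ P ⊆ Δ}) :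
    Entails Δ φ := by
  obtain ⟨P, hPA, hPΔ⟩ := hφ
  intro M hM
  exact sup_entails (hA hPA) P φ rfl M (fun ψ hψ => hM ψ (hPΔ hψ))
end

section
/- The limit set of believed premisses is maximal consistent: let Δ∞ ⊆ Σ be the unique set satisfying Δ∞ = Σ \ Out_{A∞}(Δ∞). Then Δ∞ is satisfiable, and for every φ ∈ Σ \ Δ∞ the set Δ∞ ∪ {φ} is unsatisfiable. -/
/-!
Every derivable argument is semantically valid, so an undermining argument `P ⇏ φ` with
`P ⊆ Δ∞` makes `Δ∞ ∪ {φ}` unsatisfiable; as every `φ ∈ Σ \ Δ∞` is undermined in this way,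
`Δ∞` is maximal. Conversely, if the finite set `Δ∞` were unsatisfiable it would entail `¬σ`
for any `σ ∈ Δ∞`; by completeness `Δ∞ ⇒ ¬σ` is derivable, and the contradiction rule
applied to it and `{σ} ⇒ σ` undermines the `≺'`-least element of `Δ∞` from the rest of
`Δ∞`, so that element would lie in `Out(Δ∞)`.
-/

variable {α : Type}

theorem Satisfiable.mono {S T : Set (Fml α)} (hST : S ⊆ T) (hT : Satisfiable T) :
    Satisfiable S :=
  let ⟨M, hM⟩ := hT
  ⟨M, fun ψ hψ => hM ψ (hST hψ)⟩

def Arg.Valid : Arg α → Prop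
  | .sup P φ => Entails P φ
  | .und P φ => ¬ Satisfiable (P ∪ {φ})

theorem Derivable.valid {Sg : Set (Fml α)} {lt : Fml α → Fml α → Prop} {a : Arg α}
    (h : Derivable Sg lt a) : a.Valid := by
  induction h with
  | initial => exact fun M hM => hM _ rfl
  | ax h => exact fun M _ => h M
  | mp _ _ ih₁ ih₂ =>
    exact fun M hM => ih₂ M (fun ψ hψ => hM ψ (.inr hψ)) (ih₁ M fun ψ hψ => hM ψ (.inl hψ))
  | @contra P Q φ η _ _ _ _ ih₁ ih₂ =>
    rintro ⟨M, hM⟩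
    have hPQ : ∀ ψ ∈ P ∪ Q, Fml.sat M ψ := fun ψ hψ => by
      by_cases hψη : ψ = η
      · exact hψη ▸ hM η (.inr rfl)
      · exact hM ψ (.inl ⟨hψ, hψη⟩)
    exact ih₂ M (fun ψ hψ => hPQ ψ (.inr hψ)) (ih₁ M fun ψ hψ => hPQ ψ (.inl hψ))

theorem derivable_sup_of_entails {Sg : Set (Fml α)} (lt : Fml α → Fml α → Prop)
    {S : Set (Fml α)} (hS : S.Finite) (hSg : S ⊆ Sg) {φ : Fml α} (h : Entails S φ) :
    Derivable Sg lt (.sup S φ) := by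
  induction S, hS using Set.Finite.induction_on generalizing φ with
  | empty => exact .ax fun M => h M (by simp)
  | @insert a S _ _ ih =>
    have hS : Entails S (.imp a φ) := fun M hM ha =>
      h M fun ψ hψ => hψ.elim (· ▸ ha) (hM ψ)
    rw [Set.insert_eq]
    exact .mp (.initial (hSg (Set.mem_insert a S)))
      (ih ((Set.subset_insert a S).trans hSg) hS)

theorem IsLinearExt.exists_least {β : Type} {Sg : Set β} {prec lt : β → β → Prop}
    (hlt : IsLinearExt Sg prec lt) {S : Set β} (hS : S.Finite) (hSg : S ⊆ Sg)
    (hne : S.Nonempty) : ∃ η ∈ S, ∀ x ∈ S, x ≠ η → lt η x := by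
  obtain ⟨-, hirr, htrans, htotal, -⟩ := hlt
  have : IsStrictOrder β lt := { irrefl := hirr, trans := htrans }
  obtain ⟨σ, hσ⟩ := hne
  obtain ⟨⟨η, hη⟩, -, hmin⟩ := (hS.wellFoundedOn (r := lt)).has_min Set.univ ⟨⟨σ, hσ⟩, trivial⟩
  refine ⟨η, hη, fun x hx hxη => ?_⟩
  exact (htotal η (hSg hη) x (hSg hx) hxη.symm).resolve_right (hmin ⟨x, hx⟩ trivial)

theorem exists_derivable_und_of_not_satisfiable {Sg : Set (Fml α)}
    {prec lt : Fml α → Fml α → Prop} (hlt : IsLinearExt Sg prec lt) {S : Set (Fml α)}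
    (hS : S.Finite) (hSg : S ⊆ Sg) (hunsat : ¬ Satisfiable S) :
    ∃ η ∈ S, Derivable Sg lt (.und (S \ {η}) η) := by
  obtain ⟨σ, hσ⟩ : S.Nonempty :=
    Set.nonempty_iff_ne_empty.2 fun h => hunsat ⟨∅, by simp [h]⟩
  have hnegσ : Derivable Sg lt (.sup S (.neg σ)) :=
    derivable_sup_of_entails lt hS hSg fun M hM => absurd ⟨M, hM⟩ hunsat
  obtain ⟨η, hη, hleast⟩ := hlt.exists_least hS hSg ⟨σ, hσ⟩
  have hσS : {σ} ∪ S = S := Set.union_eq_self_of_subset_left (Set.singleton_subset_iff.2 hσ)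
  refine ⟨η, hη, ?_⟩
  rw [← hσS] at hη hleast ⊢
  exact .contra (.initial (hSg hσ)) hnegσ hη hleast

theorem limit_premisses_maximal_consistent_general {α : Type} (Sg : Set (Fml α))
    (hfin : Sg.Finite) (prec lt : Fml α → Fml α → Prop)
    (hlt : IsLinearExt Sg prec lt)
    (Δ : Set (Fml α)) (hΔ : Δ = Sg \ OutA (Ainf Sg lt) Δ) :
    Satisfiable Δ ∧ ∀ φ ∈ Sg \ Δ, ¬ Satisfiable (Δ ∪ {φ}) := by
  have hΔSg : Δ ⊆ Sg := hΔ ▸ Set.sdiff_subset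
  constructor
  · by_contra hunsat
    obtain ⟨η, hηΔ, hund⟩ :=
      exists_derivable_und_of_not_satisfiable hlt (hfin.subset hΔSg) hΔSg hunsat
    have hηout : η ∈ OutA (Ainf Sg lt) Δ := ⟨Δ \ {η}, hund, Set.sdiff_subset⟩
    exact (hΔ ▸ hηΔ : η ∈ Sg \ OutA (Ainf Sg lt) Δ).2 hηout
  · rintro φ ⟨hφSg, hφΔ⟩
    obtain ⟨P, hund, hPΔ⟩ : φ ∈ OutA (Ainf Sg lt) Δ :=
      by_contra fun hφout => hφΔ (hΔ ▸ ⟨hφSg, hφout⟩)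
    exact fun hsat => (Derivable.valid hund) (hsat.mono (Set.union_subset_union_left _ hPΔ))

/-- The limit set of believed premisses is maximal consistent:
if `Δ∞ = Σ \ Out_{A∞}(Δ∞)`, then `Δ∞` is satisfiable and adding any premiss
of `Σ` outside `Δ∞` makes it unsatisfiable. -/
theorem limit_premisses_maximal_consistent {α : Type} (Sg : Set (Fml α))
    (hfin : Sg.Finite) (prec lt : Fml α → Fml α → Prop)
    (hprec : IsReliability Sg prec) (hlt : IsLinearExt Sg prec lt)
    (Δ : Set (Fml α)) (hΔ : Δ = Sg \ OutA (Ainf Sg lt) Δ) :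
    Satisfiable Δ ∧ ∀ φ ∈ Sg \ Δ, ¬ Satisfiable (Δ ∪ {φ}) :=
  limit_premisses_maximal_consistent_general Sg hfin prec lt hlt Δ hΔ
end

section
/- The limit belief set equals the theory of the believed premisses: let Δ∞ ⊆ Σ be the unique set satisfying Δ∞ = Σ \ Out_{A∞}(Δ∞), and let B∞ = {ψ | there is a supporting argument P ⇒ ψ in A∞ with P ⊆ Δ∞}. Then B∞ = Th(Δ∞) = {φ | Δ∞ semantically entails φ}. -/
/-!
Supporting arguments are sound, since the only rule that does not produce a supporting argument
is the contradiction rule. Conversely, if a finite `Δ ⊆ Σ` entails `φ`, remove the premisses of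
`Δ` one at a time by the deduction theorem until a tautology `δ₁ → (δ₂ → … → φ)` remains; the
axiom rule derives it from `∅`, and modus ponens with the initial arguments `{δᵢ} ⇒ δᵢ` puts the
premisses back.
-/

namespace Entails

variable {α : Type} {S T : Set (Fml α)} {φ ψ : Fml α}

theorem mono (h : Entails S φ) (hST : S ⊆ T) : Entails T φ :=
  fun M hM => h M fun χ hχ => hM χ (hST hχ)

theorem imp_of_insert (h : Entails (insert ψ S) φ) : Entails S (.imp ψ φ) := by
  intro M hM hψ
  exact h M (Set.forall_mem_insert.mpr ⟨hψ, hM⟩)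

theorem tautology_of_empty (h : Entails ∅ φ) : Tautology φ :=
  fun M => h M fun _ hχ => absurd hχ (Set.notMem_empty _)

end Entails

namespace Derivable

variable {α : Type} {Sg : Set (Fml α)} {lt : Fml α → Fml α → Prop}

theorem entails_of_sup {P : Set (Fml α)} {ψ : Fml α} (h : Derivable Sg lt (.sup P ψ)) :
    Entails P ψ := by
  generalize ha : Arg.sup P ψ = a at h
  induction h generalizing P ψ with
  | initial =>
    cases ha
    exact fun M hM => hM _ rfl
  | ax hφ =>
    cases ha
    exact fun M _ => hφ M
  | mp _ _ ih₁ ih₂ =>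
    cases ha
    intro M hM
    exact ih₂ rfl M (fun x hx => hM x (.inr hx)) (ih₁ rfl M fun x hx => hM x (.inl hx))
  | contra => cases ha

theorem exists_sup_of_entails {Δ : Set (Fml α)} (hfin : Δ.Finite) (hΔ : Δ ⊆ Sg) {φ : Fml α}
    (h : Entails Δ φ) : ∃ P ⊆ Δ, Derivable Sg lt (.sup P φ) := by
  induction Δ, hfin using Set.Finite.induction_on generalizing φ with
  | empty => exact ⟨∅, subset_rfl, .ax h.tautology_of_empty⟩
  | @insert δ Δ _ _ ih =>
    obtain ⟨P, hPΔ, hP⟩ := ih ((Set.subset_insert δ Δ).trans hΔ) h.imp_of_insert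
    exact ⟨{δ} ∪ P, Set.insert_subset_insert hPΔ, .mp (.initial (hΔ (Set.mem_insert δ Δ))) hP⟩

theorem setOf_sup_eq_setOf_entails {Δ : Set (Fml α)} (hfin : Δ.Finite) (hΔ : Δ ⊆ Sg) :
    {ψ | ∃ P, Arg.sup P ψ ∈ Ainf Sg lt ∧ P ⊆ Δ} = {φ | Entails Δ φ} := by
  ext φ
  constructor
  · rintro ⟨P, hP, hPΔ⟩
    exact (entails_of_sup hP).mono hPΔ
  · intro h
    obtain ⟨P, hPΔ, hP⟩ := exists_sup_of_entails (lt := lt) hfin hΔ h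
    exact ⟨P, hP, hPΔ⟩

end Derivable

theorem limit_belief_set_eq_theory_general {α : Type} (Sg : Set (Fml α))
    (hfin : Sg.Finite) (lt : Fml α → Fml α → Prop)
    (Δ : Set (Fml α)) (hΔ : Δ = Sg \ OutA (Ainf Sg lt) Δ) :
    {ψ | ∃ P, Arg.sup P ψ ∈ Ainf Sg lt ∧ P ⊆ Δ} = {φ | Entails Δ φ} := by
  have hΔSg : Δ ⊆ Sg := hΔ ▸ Set.sdiff_subset
  exact Derivable.setOf_sup_eq_setOf_entails (hfin.subset hΔSg) hΔSg

/-- The limit belief set equals the theory of the believed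
premisses: if `Δ∞ = Σ \ Out_{A∞}(Δ∞)` and
`B∞ = {ψ | ∃ (P ⇒ ψ) ∈ A∞, P ⊆ Δ∞}`, then `B∞ = Th(Δ∞)`. -/
theorem limit_belief_set_eq_theory {α : Type} (Sg : Set (Fml α))
    (hfin : Sg.Finite) (prec lt : Fml α → Fml α → Prop)
    (hprec : IsReliability Sg prec) (hlt : IsLinearExt Sg prec lt)
    (Δ : Set (Fml α)) (hΔ : Δ = Sg \ OutA (Ainf Sg lt) Δ) :
    {ψ | ∃ P, Arg.sup P ψ ∈ Ainf Sg lt ∧ P ⊆ Δ} = {φ | Entails Δ φ} :=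
  limit_belief_set_eq_theory_general Sg hfin lt Δ hΔ
end

section
/- The theorems of a reliability theory are the intersection of the limit belief sets: Th(⟨Σ, ≺⟩) = ⋂ { B∞^{≺'} | ≺' a strict linear order on Σ extending ≺ }, where B∞^{≺'} = {ψ | there is a supporting argument P ⇒ ψ in A∞^{≺'} with P ⊆ Δ∞^{≺'}} and Δ∞^{≺'} is the unique subset of Σ satisfying Δ∞^{≺'} = Σ \ Out_{A∞^{≺'}}(Δ∞^{≺'}). -/
/-!
Fix a linear extension `≺'`. The contradiction rule yields an undermining argument against `η`
from premisses in `Δ` exactly when `η` is inconsistent with the members of `Δ` above it, so the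
solutions of `Δ = Σ \ Out(Δ)` are the sets that keep a premiss iff it is consistent with the kept
premisses above it. There is only one such set (decide the premisses from the top down), and the
greedy construction along the `≺'`-decreasing enumeration of `Σ` produces it. The
`≺'`-decreasing enumerations are exactly the enumerations admitted by `≺`, so the sets `Δ∞^{≺'}`
are exactly the most reliable consistent sets; and supporting arguments are sound and complete
for finite entailment, so `B∞^{≺'} = Th(Δ∞^{≺'})`.
-/

section Entailment

variable {α : Type} {S T : Set (Fml α)} {φ : Fml α}

theorem Entails.mono_s9 (hST : S ⊆ T) (h : Entails S φ) : Entails T φ :=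
  fun M hM => h M fun ψ hψ => hM ψ (hST hψ)

theorem entails_of_not_satisfiable (h : ¬ Satisfiable S) (φ : Fml α) : Entails S φ :=
  fun M hM => absurd ⟨M, hM⟩ h

end Entailment

section Arguments

variable {α : Type} {Sg : Set (Fml α)} {lt : Fml α → Fml α → Prop}

theorem Derivable.sup_sound {P : Set (Fml α)} {φ : Fml α} (h : Derivable Sg lt (.sup P φ)) :
    P ⊆ Sg ∧ Entails P φ := by
  generalize ha : Arg.sup P φ = a at h
  induction h generalizing P φ with
  | initial hφ =>
    cases ha
    exact ⟨Set.singleton_subset_iff.2 hφ, fun M hM => hM _ rfl⟩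
  | ax hφ =>
    cases ha
    exact ⟨Set.empty_subset _, fun M _ => hφ M⟩
  | mp _ _ ih₁ ih₂ =>
    cases ha
    obtain ⟨hP, hφ⟩ := ih₁ rfl
    obtain ⟨hQ, himp⟩ := ih₂ rfl
    exact ⟨Set.union_subset hP hQ, fun M hM =>
      himp M (fun ψ hψ => hM ψ (.inr hψ)) (hφ M fun ψ hψ => hM ψ (.inl hψ))⟩
  | contra => cases ha

theorem derivable_sup_of_entails_s9 {T : Set (Fml α)} (hT : T ⊆ Sg) (hTfin : T.Finite) :
    ∀ {φ : Fml α}, Entails T φ → Derivable Sg lt (.sup T φ) := by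
  induction T, hTfin using Set.Finite.induction_on with
  | empty => exact fun h => .ax fun M => h M fun _ h => absurd h (Set.notMem_empty _)
  | @insert a s _ _ ih =>
    intro φ h
    -- deduction theorem for `⊨`, then modus ponens with the initial argument `{a} ⇒ a`
    obtain ⟨ha, hs⟩ := Set.insert_subset_iff.1 hT
    have himp : Entails s (.imp a φ) := fun M hM hMa =>
      h M fun ψ hψ => hψ.elim (fun e => e ▸ hMa) (hM ψ)
    simpa only [Set.singleton_union] using Derivable.mp (.initial ha) (ih hs himp)

theorem Derivable.und_inv {P : Set (Fml α)} {η : Fml α} (h : Derivable Sg lt (.und P η)) :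
    η ∈ Sg ∧ (∀ x ∈ P, lt η x) ∧ ¬ Satisfiable (insert η P) := by
  cases h with
  | @contra P Q φ _ h₁ h₂ hmem hmin =>
    obtain ⟨hP, hφ⟩ := h₁.sup_sound
    obtain ⟨hQ, hnφ⟩ := h₂.sup_sound
    refine ⟨Set.union_subset hP hQ hmem, fun x hx => hmin x hx.1 hx.2, ?_⟩
    rw [Set.insert_sdiff_singleton, Set.insert_eq_of_mem hmem]
    rintro ⟨M, hM⟩
    exact hnφ M (fun ψ hψ => hM ψ (.inr hψ)) (hφ M fun ψ hψ => hM ψ (.inl hψ))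

theorem derivable_und_of_not_satisfiable [Std.Irrefl lt] {P : Set (Fml α)} {η : Fml α}
    (hη : η ∈ Sg) (hP : P ⊆ Sg) (hPfin : P.Finite) (habove : ∀ x ∈ P, lt η x)
    (hunsat : ¬ Satisfiable (insert η P)) : Derivable Sg lt (.und P η) := by
  have hηP : η ∉ P := fun h => irrefl η (habove η h)
  have hsub : insert η P ⊆ Sg := Set.insert_subset hη hP
  have hfin : (insert η P).Finite := hPfin.insert η
  have hund := Derivable.contra (lt := lt)
    (derivable_sup_of_entails_s9 hsub hfin (entails_of_not_satisfiable hunsat η))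
    (derivable_sup_of_entails_s9 hsub hfin (entails_of_not_satisfiable hunsat (.neg η)))
    (.inl (Set.mem_insert η P))
    (fun x hx hxη => habove x ((Set.union_self _ ▸ hx).resolve_left hxη))
  rwa [Set.union_self, Set.insert_sdiff_self_of_notMem hηP] at hund

/-- The contradiction rule only undermines the `lt`-least member of an inconsistent set, so the
support of an undermining argument against `η` lies above `η`. -/
theorem mem_outA_ainf_iff [Std.Irrefl lt] {Δ : Set (Fml α)} (hΔ : Δ ⊆ Sg) (hΔfin : Δ.Finite)
    {η : Fml α} :
    η ∈ OutA (Ainf Sg lt) Δ ↔ η ∈ Sg ∧ ¬ Satisfiable (insert η {q ∈ Δ | lt η q}) := by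
  constructor
  · rintro ⟨P, hund, hPΔ⟩
    obtain ⟨hη, habove, hunsat⟩ := Derivable.und_inv hund
    have hP : P ⊆ {q ∈ Δ | lt η q} := fun x hx => ⟨hPΔ hx, habove x hx⟩
    refine ⟨hη, ?_⟩
    rintro ⟨M, hM⟩
    exact hunsat ⟨M, fun ψ hψ => hM ψ (Set.insert_subset_insert hP hψ)⟩
  · rintro ⟨hη, hunsat⟩
    exact ⟨_, derivable_und_of_not_satisfiable hη (fun x hx => hΔ hx.1)
      (hΔfin.subset fun x hx => hx.1) (fun x hx => hx.2) hunsat, fun x hx => hx.1⟩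

end Arguments

section GreedyConsistent

variable {α : Type} {Sg : Set (Fml α)} {lt : Fml α → Fml α → Prop}

def IsGreedyConsistent (Sg : Set (Fml α)) (lt : Fml α → Fml α → Prop) (Δ : Set (Fml α)) :
    Prop :=
  Δ ⊆ Sg ∧ ∀ η ∈ Sg, η ∈ Δ ↔ Satisfiable (insert η {q ∈ Δ | lt η q})

theorem eq_diff_outA_ainf_iff [Std.Irrefl lt] (hfin : Sg.Finite) {Δ : Set (Fml α)} :
    Δ = Sg \ OutA (Ainf Sg lt) Δ ↔ IsGreedyConsistent Sg lt Δ := by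
  constructor
  · intro h
    have hΔ : Δ ⊆ Sg := h ▸ Set.sdiff_subset
    refine ⟨hΔ, fun η hη => ?_⟩
    rw [Set.ext_iff.1 h η, Set.mem_sdiff, mem_outA_ainf_iff hΔ (hfin.subset hΔ)]
    tauto
  · rintro ⟨hΔ, hiff⟩
    ext η
    rw [Set.mem_sdiff, mem_outA_ainf_iff hΔ (hfin.subset hΔ)]
    constructor
    · intro hηΔ
      exact ⟨hΔ hηΔ, fun h => h.2 ((hiff η (hΔ hηΔ)).1 hηΔ)⟩
    · rintro ⟨hη, hout⟩
      exact (hiff η hη).2 (not_not.1 fun h => hout ⟨hη, h⟩)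

/-- Membership of `η` is determined by the members above `η`: induct downwards along `lt` on the
finite set `Sg`. -/
theorem IsGreedyConsistent.unique [IsStrictOrder (Fml α) lt] (hfin : Sg.Finite)
    {Δ₁ Δ₂ : Set (Fml α)} (h₁ : IsGreedyConsistent Sg lt Δ₁) (h₂ : IsGreedyConsistent Sg lt Δ₂) :
    Δ₁ = Δ₂ := by
  have hagree : ∀ η ∈ Sg, η ∈ Δ₁ ↔ η ∈ Δ₂ := fun η hη =>
    (hfin.wellFoundedOn (r := Function.swap lt)).induction hη
      (P := fun η => η ∈ Δ₁ ↔ η ∈ Δ₂) fun η hη ih => by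
      have habove : {q ∈ Δ₁ | lt η q} = {q ∈ Δ₂ | lt η q} := by
        ext q
        constructor
        · exact fun ⟨hq, hlt⟩ => ⟨(ih q (h₁.1 hq) hlt).1 hq, hlt⟩
        · exact fun ⟨hq, hlt⟩ => ⟨(ih q (h₂.1 hq) hlt).2 hq, hlt⟩
      rw [h₁.2 η hη, h₂.2 η hη, habove]
  ext η
  exact ⟨fun h => (hagree η (h₁.1 h)).1 h, fun h => (hagree η (h₂.1 h)).2 h⟩

open scoped Classical in
theorem mrcBuild_append_singleton (l : List (Fml α)) (σ : Fml α) :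
    mrcBuild (l ++ [σ]) =
      if Satisfiable (insert σ (mrcBuild l)) then insert σ (mrcBuild l) else mrcBuild l := by
  unfold mrcBuild
  rw [List.foldl_append]
  rfl

/-- The premiss added last lies below all earlier ones, so it changes none of their decisions. -/
theorem isGreedyConsistent_mrcBuild [IsStrictOrder (Fml α) lt] {l : List (Fml α)}
    (hl : l.Pairwise (Function.swap lt)) :
    IsGreedyConsistent {x | x ∈ l} lt (mrcBuild l) := by
  induction l using List.reverseRecOn with
  | nil => simp [IsGreedyConsistent, mrcBuild]
  | append_singleton l σ ih =>
    obtain ⟨hl, -, hσ⟩ := List.pairwise_append.1 hl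
    simp only [List.mem_singleton, forall_eq, Function.swap] at hσ
    obtain ⟨hsub, hiff⟩ := ih hl
    have hσl : σ ∉ l := fun h => irrefl σ (hσ σ h)
    have hnotabove : ∀ η ∈ l ++ [σ], ¬ lt η σ := by
      simp only [List.mem_append, List.mem_singleton]
      rintro η (hη | rfl)
      exacts [asymm (hσ η hη), irrefl η]
    have hσD : σ ∉ mrcBuild l := fun h => hσl (hsub h)
    have hbelow : {q ∈ mrcBuild l | lt σ q} = mrcBuild l :=
      Set.sep_eq_self_iff_mem_true.2 fun q hq => hσ q (hsub hq)
    have hstep : mrcBuild l ⊆ mrcBuild (l ++ [σ]) ∧ mrcBuild (l ++ [σ]) ⊆ insert σ (mrcBuild l) ∧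
        (σ ∈ mrcBuild (l ++ [σ]) ↔ Satisfiable (insert σ (mrcBuild l))) := by
      rw [mrcBuild_append_singleton]
      split_ifs with hsat
      · exact ⟨Set.subset_insert σ _, subset_rfl, iff_of_true (Set.mem_insert σ _) hsat⟩
      · exact ⟨subset_rfl, Set.subset_insert σ _, iff_of_false hσD hsat⟩
    obtain ⟨hmono, hinsert, hσiff⟩ := hstep
    have hsep : ∀ η ∈ l ++ [σ], {q ∈ mrcBuild (l ++ [σ]) | lt η q} = {q ∈ mrcBuild l | lt η q} :=
      fun η hη => Set.Subset.antisymm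
        (fun q ⟨hq, hlt⟩ =>
          ⟨(hinsert hq).resolve_left (by rintro rfl; exact hnotabove η hη hlt), hlt⟩)
        (fun q ⟨hq, hlt⟩ => ⟨hmono hq, hlt⟩)
    refine ⟨fun x hx => ?_, fun η hη => ?_⟩
    · rcases hinsert hx with rfl | hx
      · exact List.mem_append_right l (List.mem_singleton_self x)
      · exact List.mem_append_left [σ] (hsub hx)
    · rw [hsep η hη]
      rcases List.mem_append.1 hη with hηl | hησ
      · have hne : η ≠ σ := by rintro rfl; exact hσl hηl
        rw [← hiff η hηl]
        exact ⟨fun h => (hinsert h).resolve_left hne, fun h => hmono h⟩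
      · rw [List.mem_singleton.1 hησ, hσiff, hbelow]

end GreedyConsistent

section Enumerations

variable {β : Type}

theorem Set.Finite.exists_list_pairwise {s : Set β} (hs : s.Finite) {r : β → β → Prop}
    [IsStrictOrder β r] (htot : ∀ a ∈ s, ∀ b ∈ s, a ≠ b → r a b ∨ r b a) :
    ∃ l : List β, (∀ x, x ∈ l ↔ x ∈ s) ∧ l.Pairwise r := by
  classical
  have := hs.fintype
  have : IsStrictTotalOrder s fun a b => r a b :=
    { trichotomous := fun a b hab hba =>
        Subtype.ext (by_contra fun hne => (htot a a.2 b b.2 hne).elim hab hba)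
      irrefl := fun a => irrefl (a : β)
      trans := fun _ _ _ => _root_.trans }
  let := linearOrderOfSTO fun a b : s => r a b
  exact ⟨(Finset.univ : Finset s).sort.map Subtype.val, fun x => by simp,
    List.pairwise_map.2 (Finset.sortedLT_sort _).pairwise⟩

variable {Sg : Set β} {prec lt : β → β → Prop}

theorem IsLinearExt.isStrictOrder (h : IsLinearExt Sg prec lt) : IsStrictOrder β lt :=
  { irrefl := h.2.1, trans := h.2.2.1 }

theorem IsLinearExt.exists_isEnum (hfin : Sg.Finite) (h : IsLinearExt Sg prec lt) :
    ∃ l, IsEnum Sg prec l ∧ l.Pairwise (Function.swap lt) := by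
  have := h.isStrictOrder
  obtain ⟨l, hmem, hl⟩ := hfin.exists_list_pairwise (r := Function.swap lt)
    fun a ha b hb hab => (h.2.2.2.1 a ha b hb hab).symm
  refine ⟨l, ⟨hl.nodup, hmem, fun j k hjk => ?_⟩, hl⟩
  have hlt := h.2.2.2.2 _ _ hjk
  by_contra! hkj
  rcases (Fin.le_def.2 hkj).lt_or_eq with hjk' | rfl
  · exact asymm hlt (List.pairwise_iff_get.1 hl j k hjk')
  · exact irrefl _ hlt

theorem IsEnum.exists_isLinearExt (hdom : ∀ a b, prec a b → a ∈ Sg ∧ b ∈ Sg) {l : List β}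
    (he : IsEnum Sg prec l) :
    ∃ lt, IsLinearExt Sg prec lt ∧ l.Pairwise (Function.swap lt) := by
  classical
  obtain ⟨hnd, hmem, hord⟩ := he
  refine ⟨fun x y => x ∈ l ∧ y ∈ l ∧ l.idxOf y < l.idxOf x, ⟨?_, ?_, ?_, ?_, ?_⟩, ?_⟩
  · exact fun a b ⟨ha, hb, _⟩ => ⟨(hmem a).1 ha, (hmem b).1 hb⟩
  · exact fun a ⟨_, _, h⟩ => h.false
  · exact fun a b c ⟨ha, _, h₁⟩ ⟨_, hc, h₂⟩ => ⟨ha, hc, h₂.trans h₁⟩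
  · intro a ha b hb hab
    rw [← hmem] at ha hb
    rcases lt_trichotomy (l.idxOf a) (l.idxOf b) with h | h | h
    · exact .inr ⟨hb, ha, h⟩
    · exact absurd ((List.idxOf_inj ha).1 h) hab
    · exact .inl ⟨ha, hb, h⟩
  · intro a b hab
    have ha := (hmem a).2 (hdom a b hab).1
    have hb := (hmem b).2 (hdom a b hab).2
    refine ⟨ha, hb, hord ⟨_, List.idxOf_lt_length_of_mem ha⟩ ⟨_, List.idxOf_lt_length_of_mem hb⟩ ?_⟩
    rwa [List.idxOf_get, List.idxOf_get]
  · rw [List.pairwise_iff_getElem]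
    intro i j hi hj hij
    exact ⟨List.getElem_mem _, List.getElem_mem _, by rwa [hnd.idxOf_getElem, hnd.idxOf_getElem]⟩

end Enumerations

/-- The theorems of a reliability theory are the intersection of
the limit belief sets `B∞^{≺'}` over all strict linear extensions `≺'` of `≺`. -/
theorem theorems_eq_inter_belief_sets {α : Type} (Sg : Set (Fml α))
    (hfin : Sg.Finite) (prec : Fml α → Fml α → Prop)
    (hprec : IsReliability Sg prec) :
    ThR Sg prec =
      {φ | ∀ lt, IsLinearExt Sg prec lt →
        ∀ Δ, Δ = Sg \ OutA (Ainf Sg lt) Δ →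
          ∃ P, Arg.sup P φ ∈ Ainf Sg lt ∧ P ⊆ Δ} := by
  ext φ
  constructor
  · intro hφ lt hlt Δ hΔ
    have := hlt.isStrictOrder
    obtain ⟨l, hl, hpw⟩ := hlt.exists_isEnum hfin
    have hmrc : IsGreedyConsistent Sg lt (mrcBuild l) :=
      Set.ext hl.2.1 ▸ isGreedyConsistent_mrcBuild hpw
    have hΔmrc : Δ = mrcBuild l := ((eq_diff_outA_ainf_iff hfin).1 hΔ).unique hfin hmrc
    have hΔSg : Δ ⊆ Sg := hΔ ▸ Set.sdiff_subset
    exact ⟨Δ, derivable_sup_of_entails_s9 hΔSg (hfin.subset hΔSg) (hφ Δ ⟨l, hl, hΔmrc⟩), subset_rfl⟩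
  · rintro hφ D ⟨l, hl, rfl⟩
    obtain ⟨lt, hlt, hpw⟩ := hl.exists_isLinearExt hprec.1
    have := hlt.isStrictOrder
    have hmrc : IsGreedyConsistent Sg lt (mrcBuild l) :=
      Set.ext hl.2.1 ▸ isGreedyConsistent_mrcBuild hpw
    obtain ⟨P, hP, hPD⟩ := hφ lt hlt _ ((eq_diff_outA_ainf_iff hfin).2 hmrc)
    exact hP.sup_sound.2.mono_s9 hPD
end

section
/- The preference relation on interpretations is a strict partial order: for a reliability theory ⟨Σ, ≺⟩, the relation ⊏ on interpretations defined by M ⊏ N iff Prem(M) ≠ Prem(N) and for every φ ∈ Prem(M) \ Prem(N) there exists ψ ∈ Prem(N) \ Prem(M) with φ ≺ ψ, is irreflexive (in particular, M ⊏ N and N ⊏ M cannot both hold) and transitive. -/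
/-!
`M ⊏ N` compares `Prem(M)` and `Prem(N)` through the set extension of `≺`. Since `Σ` is finite,
`≺` has no infinite ascending chains, so properties of the symmetric differences can be proved by
induction from the `≺`-maximal premisses downwards: a premiss on the wrong side is always
dominated by a more reliable one that, by induction, is already settled.
-/

/-- The Dershowitz–Manna multiset ordering, restricted to sets. -/
def SetExtension {β : Type*} (r : β → β → Prop) (A B : Set β) : Prop :=
  A ≠ B ∧ ∀ x ∈ A \ B, ∃ y ∈ B \ A, r x y

namespace SetExtension

variable {β : Type*} {r : β → β → Prop} {A B C : Set β}

theorem irrefl (A : Set β) : ¬ SetExtension r A A := fun h => h.1 rfl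

theorem asymm (hwf : (A ∪ B).WellFoundedOn (Function.swap r)) (hAB : SetExtension r A B) :
    ¬ SetExtension r B A := by
  intro hBA
  have settled : ∀ x ∈ A ∪ B, x ∉ A \ B ∧ x ∉ B \ A := by
    intro x hx
    refine hwf.induction (P := fun x => x ∉ A \ B ∧ x ∉ B \ A) hx
      fun y _ ih => ⟨fun hy => ?_, fun hy => ?_⟩
    · obtain ⟨z, hz, hyz⟩ := hAB.2 y hy
      exact (ih z (Or.inr hz.1) hyz).2 hz
    · obtain ⟨z, hz, hyz⟩ := hBA.2 y hy
      exact (ih z (Or.inl hz.1) hyz).1 hz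
  refine hAB.1 (Set.Subset.antisymm (fun x hxA => ?_) (fun x hxB => ?_))
  · by_contra hxB
    exact (settled x (Or.inl hxA)).1 ⟨hxA, hxB⟩
  · by_contra hxA
    exact (settled x (Or.inr hxB)).2 ⟨hxB, hxA⟩

theorem trans [IsTrans β r] (hwf : (A ∪ B).WellFoundedOn (Function.swap r))
    (hAB : SetExtension r A B) (hBC : SetExtension r B C) : SetExtension r A C := by
  have dominated : ∀ x ∈ A ∪ B, x ∈ A \ B ∨ x ∈ B \ C → ∃ y ∈ C \ A, r x y := by
    intro x hx
    refine hwf.induction (P := fun x => x ∈ A \ B ∨ x ∈ B \ C → ∃ y ∈ C \ A, r x y) hx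
      fun y _ ih hy => ?_
    rcases hy with hy | hy
    · obtain ⟨z, ⟨hzB, hzA⟩, hyz⟩ := hAB.2 y hy
      by_cases hzC : z ∈ C
      · exact ⟨z, ⟨hzC, hzA⟩, hyz⟩
      · obtain ⟨w, hw, hzw⟩ := ih z (Or.inr hzB) hyz (Or.inr ⟨hzB, hzC⟩)
        exact ⟨w, hw, _root_.trans hyz hzw⟩
    · obtain ⟨z, ⟨hzC, hzB⟩, hyz⟩ := hBC.2 y hy
      by_cases hzA : z ∈ A
      · obtain ⟨w, hw, hzw⟩ := ih z (Or.inl hzA) hyz (Or.inl ⟨hzA, hzB⟩)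
        exact ⟨w, hw, _root_.trans hyz hzw⟩
      · exact ⟨z, ⟨hzC, hzA⟩, hyz⟩
  refine ⟨?_, fun x hx => dominated x (Or.inl hx.1) ?_⟩
  · rintro rfl
    exact hAB.asymm hwf hBC
  · by_cases hxB : x ∈ B
    · exact Or.inr ⟨hxB, hx.2⟩
    · exact Or.inl ⟨hx.1, hxB⟩

end SetExtension

theorem pref_iff_setExtension {α : Type} (Sg : Set (Fml α)) (prec : Fml α → Fml α → Prop)
    (M N : Set α) : Pref Sg prec M N ↔ SetExtension prec (PremOf Sg M) (PremOf Sg N) :=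
  Iff.rfl

/-- The preference relation `⊏` on interpretations is a strict
partial order: irreflexive (in particular asymmetric) and transitive. -/
theorem pref_irrefl_asymm_trans {α : Type} (Sg : Set (Fml α)) (hfin : Sg.Finite)
    (prec : Fml α → Fml α → Prop) (hprec : IsReliability Sg prec) :
    (∀ M : Set α, ¬ Pref Sg prec M M) ∧
    (∀ M N : Set α, ¬ (Pref Sg prec M N ∧ Pref Sg prec N M)) ∧
    (∀ L M N : Set α, Pref Sg prec L M → Pref Sg prec M N → Pref Sg prec L N) := by
  obtain ⟨-, hirr, -, htrans⟩ := hprec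
  have : IsStrictOrder (Fml α) prec := { irrefl := hirr, trans := htrans }
  have hwf (M N : Set α) :
      (PremOf Sg M ∪ PremOf Sg N).WellFoundedOn (Function.swap prec) :=
    (hfin.subset (Set.union_subset (fun _ h => h.1) (fun _ h => h.1))).wellFoundedOn
  simp only [pref_iff_setExtension]
  exact ⟨fun M => SetExtension.irrefl _, fun M N h => h.1.asymm (hwf M N) h.2,
    fun L M N => SetExtension.trans (hwf L M)⟩
end

section
/- Smoothness of the preference relation: for a reliability theory ⟨Σ, ≺⟩, for every formula α and every interpretation M with M ⊨ α, either M is ⊏-maximal among interpretations satisfying α (no N with N ⊨ α and M ⊏ N), or there exists an interpretation N with N ⊨ α, M ⊏ N, and N is ⊏-maximal among interpretations satisfying α. Together with irreflexivity and transitivity of ⊏, this makes the inverse relation a preferential model in the sense of Kraus, Lehmann and Magidor. -/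
/-!
`M ⊏ N` depends only on `Prem M` and `Prem N`, and as a relation between finite sets of premisses
it is transitive: chasing an element of `Prem L \ Prem N` upward through the differences
`Prem L \ Prem M` and `Prem M \ Prem N` must stop, by finiteness, at a premiss of
`Prem N \ Prem L`. An irreflexive transitive relation taking finitely many values has no infinite
ascending chains, so among the models of `a` strictly above `M` there is a maximal one.
-/

open Function Set

section SetPref

variable {β : Type*} {r : β → β → Prop} {A B C s : Set β}

-- `Pref Sg prec M N` unfolds to `SetPref prec (PremOf Sg M) (PremOf Sg N)`.
def SetPref (r : β → β → Prop) (A B : Set β) : Prop :=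
  A ≠ B ∧ ∀ φ ∈ A \ B, ∃ ψ ∈ B \ A, r φ ψ

theorem setPref_irrefl (A : Set β) : ¬ SetPref r A A := fun h => h.1 rfl

theorem exists_mem_diff_above_of_diff_above [IsStrictOrder β r] (hA : A.Finite) (hB : B.Finite)
    (hAB : ∀ φ ∈ A \ B, ∃ ψ ∈ B \ A, r φ ψ) (hBC : ∀ φ ∈ B \ C, ∃ ψ ∈ C \ B, r φ ψ) :
    ∀ x ∈ A \ B ∪ B \ C, ∃ ψ ∈ C \ A, r x ψ := by
  have hwf : (A \ B ∪ B \ C).WellFoundedOn (swap r) :=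
    (hA.sdiff.union hB.sdiff).wellFoundedOn
  intro x hx
  refine hwf.induction (P := fun y => ∃ ψ ∈ C \ A, r y ψ) hx fun y hy ih => ?_
  rcases hy with ⟨hyA, hyB⟩ | ⟨hyB, hyC⟩
  · obtain ⟨χ, ⟨hχB, hχA⟩, hyχ⟩ := hAB y ⟨hyA, hyB⟩
    by_cases hχC : χ ∈ C
    · exact ⟨χ, ⟨hχC, hχA⟩, hyχ⟩
    · obtain ⟨ψ, hψ, hχψ⟩ := ih χ (Or.inr ⟨hχB, hχC⟩) hyχ
      exact ⟨ψ, hψ, _root_.trans hyχ hχψ⟩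
  · obtain ⟨χ, ⟨hχC, hχB⟩, hyχ⟩ := hBC y ⟨hyB, hyC⟩
    by_cases hχA : χ ∈ A
    · obtain ⟨ψ, hψ, hχψ⟩ := ih χ (Or.inl ⟨hχA, hχB⟩) hyχ
      exact ⟨ψ, hψ, _root_.trans hyχ hχψ⟩
    · exact ⟨χ, ⟨hχC, hχA⟩, hyχ⟩

theorem SetPref.trans [IsStrictOrder β r] (hA : A.Finite) (hB : B.Finite)
    (hAB : SetPref r A B) (hBC : SetPref r B C) : SetPref r A C := by
  have key := exists_mem_diff_above_of_diff_above hA hB hAB.2 hBC.2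
  refine ⟨?_, fun φ hφ => ?_⟩
  · rintro rfl
    obtain ⟨x, hx⟩ := symmDiff_nonempty.2 hAB.1
    obtain ⟨ψ, hψ, -⟩ := key x hx
    exact hψ.2 hψ.1
  · by_cases hφB : φ ∈ B
    · exact key φ (Or.inr ⟨hφB, hφ.2⟩)
    · exact key φ (Or.inl ⟨hφ.1, hφB⟩)

theorem Set.Finite.wellFoundedOn_powerset_swap_setPref [IsStrictOrder β r] (hs : s.Finite) :
    (𝒫 s).WellFoundedOn (swap (SetPref r)) := by
  have : Finite (𝒫 s) := hs.powerset.to_subtype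
  have : IsTrans (𝒫 s) (Subrel (swap (SetPref r)) (· ∈ 𝒫 s)) :=
    ⟨fun A B C hAB hBC => SetPref.trans (hs.subset C.2) (hs.subset B.2) hBC hAB⟩
  have : Std.Irrefl (Subrel (swap (SetPref r)) (· ∈ 𝒫 s)) := ⟨fun A => setPref_irrefl A.1⟩
  exact Finite.wellFounded_of_trans_of_irrefl _

end SetPref

theorem WellFounded.not_exists_or_exists_maximal_above {X : Type*} {R : X → X → Prop}
    [IsTrans X R] (hwf : WellFounded (swap R)) (P : X → Prop) (x : X) :
    (¬ ∃ y, P y ∧ R x y) ∨ ∃ y, P y ∧ R x y ∧ ¬ ∃ z, P z ∧ R y z := by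
  by_cases h : ∃ y, P y ∧ R x y
  · obtain ⟨y, ⟨hPy, hxy⟩, hmax⟩ := hwf.has_min {y | P y ∧ R x y} h
    exact .inr ⟨y, hPy, hxy, fun ⟨z, hPz, hyz⟩ => hmax z ⟨hPz, _root_.trans hxy hyz⟩ hyz⟩
  · exact .inl h

section Pref

variable {α : Type} {Sg : Set (Fml α)} {prec : Fml α → Fml α → Prop}

theorem premOf_subset (Sg : Set (Fml α)) (M : Set α) : PremOf Sg M ⊆ Sg := fun _ h => h.1

theorem pref_trans [IsStrictOrder (Fml α) prec] (hfin : Sg.Finite) {L M N : Set α}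
    (hLM : Pref Sg prec L M) (hMN : Pref Sg prec M N) : Pref Sg prec L N :=
  SetPref.trans (hfin.subset (premOf_subset Sg L)) (hfin.subset (premOf_subset Sg M)) hLM hMN

theorem wellFounded_swap_pref [IsStrictOrder (Fml α) prec] (hfin : Sg.Finite) :
    WellFounded (swap (Pref Sg prec)) :=
  wellFoundedOn_range.1 <|
    hfin.wellFoundedOn_powerset_swap_setPref.subset (range_subset_iff.2 (premOf_subset Sg))

end Pref

/-- Smoothness of the preference relation: `⊏` is irreflexive and
transitive and, for every formula `a`, every interpretation satisfying `a` is
either `⊏`-maximal among models of `a` or below such a `⊏`-maximal one; hence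
the inverse relation yields a KLM preferential model. -/
theorem pref_smooth {α : Type} (Sg : Set (Fml α)) (hfin : Sg.Finite)
    (prec : Fml α → Fml α → Prop) (hprec : IsReliability Sg prec) :
    (∀ M : Set α, ¬ Pref Sg prec M M) ∧
    (∀ L M N : Set α, Pref Sg prec L M → Pref Sg prec M N → Pref Sg prec L N) ∧
    (∀ (a : Fml α) (M : Set α), Fml.sat M a →
      (¬ ∃ N : Set α, Fml.sat N a ∧ Pref Sg prec M N) ∨
      (∃ N : Set α, Fml.sat N a ∧ Pref Sg prec M N ∧
        ¬ ∃ L : Set α, Fml.sat L a ∧ Pref Sg prec N L)) := by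
  obtain ⟨-, hirr, -, htrans⟩ := hprec
  have : IsStrictOrder (Fml α) prec := { irrefl := hirr, trans := htrans }
  have : IsTrans (Set α) (Pref Sg prec) := ⟨fun _ _ _ => pref_trans hfin⟩
  exact ⟨fun M => setPref_irrefl _, fun _ _ _ => pref_trans hfin,
    fun a M _ =>
      (wellFounded_swap_pref hfin).not_exists_or_exists_maximal_above (Fml.sat · a) M⟩
end
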